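/- Let (X, d) be a compact metric space, let f : X → X be a homeomorphism satisfying the specification property, and let p ∈ X be a periodic point of f. Suppose there exists ε_1 > 0 such that every point y ∈ X with d(f^{-n}(y), f^{-n}(p)) ≤ ε_1 for all n ≥ 0 satisfies d(f^{-n}(y), f^{-n}(p)) → 0 as n → ∞ (i.e., the local unstable set of p of size ε_1 is contained in the unstable set of p). Then the unstable set W^u(p) = {y ∈ X : d(f^{-n}(y), f^{-n}(p)) → 0 as n → ∞} is dense in X. -/

import Mathlib

open Filter Topology Set Metric

/-
Fix `z` and `r > 0` and let `ε = min ε₁ (r / 2)`. Specification glues an orbit segment of `p`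
over the times `[-(m + M), -m]` to the point `z` at time `0`, for every `M`, once the gap `m`
exceeds the specification constant; compactness (the finite intersection property) then gives a
point `y` with `d(y, z) ≤ ε` whose whole backward orbit from time `-m` on stays `ε`-close to
that of `p`. Choosing `m` a multiple of the period of `p`, the point `f^{-m} y` lies in the
local unstable set of `p = f^{-m} p`, hence in `W^u(p)`, and so does `y`.
-/

/-- The specification property for a homeomorphism `f` of a metric space. -/
def SpecProp {X : Type*} [MetricSpace X] (f : X ≃ₜ X) : Prop :=
  ∀ ε : ℝ, 0 < ε → ∃ N : ℕ, 0 < N ∧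
    ∀ (k : ℕ) (m n : ℕ → ℤ) (xs : ℕ → X),
      (∀ j < k, m j ≤ n j) →
      (∀ i < k, ∀ j < k, i ≠ j →
        ∀ a ∈ Set.Icc (m i) (n i), ∀ b ∈ Set.Icc (m j) (n j), (N : ℤ) ≤ |a - b|) →
      ∃ x : X, ∀ j < k, ∀ i ∈ Set.Icc (m j) (n j),
        dist ((f.toEquiv ^ i) x) ((f.toEquiv ^ i) (xs j)) ≤ ε

namespace Equiv.Perm

variable {α : Type*} (σ : Perm α)

theorem zpow_neg_apply_zpow_neg (m n : ℕ) (x : α) :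
    (σ ^ (-(n : ℤ))) ((σ ^ (-(m : ℤ))) x) = (σ ^ (-((n + m : ℕ) : ℤ))) x := by
  rw [← mul_apply, ← zpow_add]
  push_cast
  ring_nf

variable {σ}

theorem exists_le_zpow_neg_apply_eq_self {k : ℕ} {p : α} (hk : 1 ≤ k) (hkp : (σ ^ (k : ℤ)) p = p)
    (N : ℕ) : ∃ m ≥ N, (σ ^ (-(m : ℤ))) p = p := by
  refine ⟨k * N, Nat.le_mul_of_pos_left N hk, ?_⟩
  rw [show -((k * N : ℕ) : ℤ) = (k : ℤ) * -(N : ℤ) by push_cast; ring, zpow_mul]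
  exact zpow_apply_eq_self_of_apply_eq_self hkp _

end Equiv.Perm

theorem Homeomorph.toEquiv_zpow {X : Type*} [TopologicalSpace X] (f : X ≃ₜ X) (i : ℤ) :
    (f ^ i).toEquiv = f.toEquiv ^ i :=
  map_zpow (MonoidHom.mk' (fun g : X ≃ₜ X => g.toEquiv) fun _ _ => rfl) f i

theorem Homeomorph.continuous_toEquiv_zpow {X : Type*} [TopologicalSpace X] (f : X ≃ₜ X)
    (i : ℤ) : Continuous (f.toEquiv ^ i) := by
  rw [← toEquiv_zpow]
  exact (f ^ i).continuous

section Unstable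

variable {X : Type*} [MetricSpace X]

def unstableSet (σ : Equiv.Perm X) (p : X) : Set X :=
  {y | Tendsto (fun n : ℕ => dist ((σ ^ (-(n : ℤ))) y) ((σ ^ (-(n : ℤ))) p)) atTop (𝓝 0)}

theorem mem_unstableSet_iff_zpow_neg {σ : Equiv.Perm X} {p y : X} (m : ℕ) :
    y ∈ unstableSet σ p ↔ (σ ^ (-(m : ℤ))) y ∈ unstableSet σ ((σ ^ (-(m : ℤ))) p) := by
  simp only [unstableSet, mem_ofPred_eq, Equiv.Perm.zpow_neg_apply_zpow_neg]
  exact (tendsto_add_atTop_iff_nat m).symm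

end Unstable

namespace SpecProp

variable {X : Type*} [MetricSpace X] {f : X ≃ₜ X}

theorem exists_shadow_two_segments (hf : SpecProp f) {ε : ℝ} (hε : 0 < ε) :
    ∃ N : ℕ, ∀ a b c d : ℤ, a ≤ b → b + N ≤ c → c ≤ d → ∀ x y : X, ∃ w : X,
      (∀ i ∈ Icc a b, dist ((f.toEquiv ^ i) w) ((f.toEquiv ^ i) x) ≤ ε) ∧
      ∀ i ∈ Icc c d, dist ((f.toEquiv ^ i) w) ((f.toEquiv ^ i) y) ≤ ε := by
  obtain ⟨N, -, hN⟩ := hf ε hε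
  refine ⟨N, fun a b c d hab hbc hcd x y => ?_⟩
  obtain ⟨w, hw⟩ := hN 2 (fun j => if j = 0 then a else c) (fun j => if j = 0 then b else d)
    (fun j => if j = 0 then x else y)
    (fun j hj => by interval_cases j <;> simpa)
    (fun i hi j hj hij s hs t ht => by
      rw [le_abs]
      interval_cases i <;> interval_cases j <;> simp at hs ht <;> omega)
  exact ⟨w, by simpa using hw 0, by simpa using hw 1⟩

theorem exists_near_backward_shadow [CompactSpace X] (hf : SpecProp f) {ε : ℝ} (hε : 0 < ε) :
    ∃ N : ℕ, ∀ m ≥ N, ∀ z p : X, ∃ y ∈ closedBall z ε, ∀ n : ℕ,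
      dist ((f.toEquiv ^ (-((n + m : ℕ) : ℤ))) y) ((f.toEquiv ^ (-((n + m : ℕ) : ℤ))) p) ≤ ε := by
  obtain ⟨N, hN⟩ := hf.exists_shadow_two_segments hε
  refine ⟨N, fun m hm z p => ?_⟩
  let shadows (n : ℕ) : Set X :=
    {y | dist ((f.toEquiv ^ (-((n + m : ℕ) : ℤ))) y) ((f.toEquiv ^ (-((n + m : ℕ) : ℤ))) p) ≤ ε}
  have shadows_closed (n : ℕ) : IsClosed (shadows n) :=
    isClosed_le ((f.continuous_toEquiv_zpow _).dist continuous_const) continuous_const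
  have finite_shadows (u : Finset ℕ) : (closedBall z ε ∩ ⋂ n ∈ u, shadows n).Nonempty := by
    obtain ⟨w, hwp, hwz⟩ := hN (-((u.sup id + m : ℕ) : ℤ)) (-(m : ℤ)) 0 0
      (by omega) (by omega) le_rfl p z
    refine ⟨w, by simpa using hwz 0 (by simp), mem_iInter₂.2 fun n hn => hwp _ ?_⟩
    have : n ≤ u.sup id := Finset.le_sup (f := id) hn
    constructor <;> omega
  obtain ⟨y, hyz, hy⟩ :=
    isClosed_closedBall.isCompact.inter_iInter_nonempty shadows shadows_closed finite_shadows
  have hy : ∀ n, y ∈ shadows n := mem_iInter.1 hy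
  exact ⟨y, hyz, hy⟩

end SpecProp

/-- if `f` satisfies the specification property, `p` is a periodic point, and
some local unstable set of `p` is contained in the unstable set of `p`, then the unstable
set `W^u(p) = {y : d(f^{-n} y, f^{-n} p) → 0}` is dense in `X`. -/
theorem dense_unstable_manifold_of_periodic {X : Type*} [MetricSpace X] [CompactSpace X]
    (f : X ≃ₜ X) (hf : SpecProp f) (p : X)
    (hper : ∃ k : ℕ, 1 ≤ k ∧ (f.toEquiv ^ (k : ℤ)) p = p)
    (hloc : ∃ ε₁ : ℝ, 0 < ε₁ ∧ ∀ y : X,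
      (∀ n : ℕ, dist ((f.toEquiv ^ (-(n : ℤ))) y) ((f.toEquiv ^ (-(n : ℤ))) p) ≤ ε₁) →
      Tendsto (fun n : ℕ => dist ((f.toEquiv ^ (-(n : ℤ))) y) ((f.toEquiv ^ (-(n : ℤ))) p))
        atTop (nhds 0)) :
    Dense {y : X |
      Tendsto (fun n : ℕ => dist ((f.toEquiv ^ (-(n : ℤ))) y) ((f.toEquiv ^ (-(n : ℤ))) p))
        atTop (nhds 0)} := by
  obtain ⟨k, hk, hkp⟩ := hper
  obtain ⟨ε₁, hε₁, hloc⟩ := hloc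
  show Dense (unstableSet f.toEquiv p)
  refine Metric.dense_iff.2 fun z r hr => ?_
  obtain ⟨N, hN⟩ := hf.exists_near_backward_shadow (lt_min hε₁ (half_pos hr))
  obtain ⟨m, hm, hmp⟩ := Equiv.Perm.exists_le_zpow_neg_apply_eq_self hk hkp N
  obtain ⟨y, hyz, hy⟩ := hN m hm z p
  refine ⟨y, ?_, ?_⟩
  · have : dist y z ≤ r / 2 := (mem_closedBall.1 hyz).trans (min_le_right _ _)
    exact mem_ball.2 (by linarith)
  · rw [mem_unstableSet_iff_zpow_neg m, hmp]
    refine hloc _ fun n => (le_of_eq ?_).trans ((hy n).trans (min_le_left _ _))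
    rw [← Equiv.Perm.zpow_neg_apply_zpow_neg, ← Equiv.Perm.zpow_neg_apply_zpow_neg, hmp]
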